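/- arXiv:1907.06379 — 6 statements merged into one kernel-verified Lean document; each statement's English description precedes it below -/
import Mathlib

section
/- Every path P = v₁v₂…vₙ with at least 5 edges admits a proper orientation with maximum in-degree at most 2 such that d⁻(v₁)=0, d⁻(v₂)=1, d⁻(v_{n−2})=0, d⁻(v_{n−1})=2, and d⁻(vₙ)=0. -/
open SimpleGraph

/-- `D` is an orientation of `G`: each edge gets exactly one direction. -/
def IsOrientation {V : Type*} (G : SimpleGraph V) (D : V → V → Prop) : Prop :=
  (∀ u v, G.Adj u v ↔ (D u v ∨ D v u)) ∧ ∀ u v, ¬(D u v ∧ D v u)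

/-- In-degree of `v` in the orientation `D`. -/
noncomputable def inDeg {V : Type*} (D : V → V → Prop) (v : V) : ℕ :=
  Nat.card {u : V // D u v}

/-- An orientation is proper if adjacent vertices have distinct in-degrees. -/
def IsProper {V : Type*} (G : SimpleGraph V) (D : V → V → Prop) : Prop :=
  ∀ u v, G.Adj u v → inDeg D u ≠ inDeg D v

/-!
Orient the edge `i — i+1` forward unless `i ≡ 2 (mod 3)`, so that the in-degrees along the path
run `0, 1, 2, 0, 1, 2, …`. Near the end the pattern is broken: the last three edges point
backward, forward, backward, so the path ends with in-degrees `0, 2, 0`, and the vertex before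
these gets in-degree `1` or `2` according to `n mod 3`, whichever differs from its left neighbour.
-/

def pathOrientation (n : ℕ) (f : ℕ → Prop) (u v : Fin n) : Prop :=
  (u.val + 1 = v.val ∧ f u.val) ∨ (v.val + 1 = u.val ∧ ¬ f v.val)

theorem isOrientation_pathOrientation (n : ℕ) (f : ℕ → Prop) :
    IsOrientation (pathGraph n) (pathOrientation n f) := by
  refine ⟨fun u v ↦ ?_, fun u v ↦ ?_⟩
  · rw [pathGraph_adj]
    unfold pathOrientation
    tauto
  · rintro ⟨⟨huv, hf⟩ | ⟨hvu, hf⟩, ⟨hvu', hf'⟩ | ⟨huv', hf'⟩⟩ <;>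
      first | omega | exact hf' hf | exact hf hf'

theorem Fin.card_subtype_val_eq_and (n k : ℕ) (p : Prop) [Decidable p] :
    Nat.card {u : Fin n // u.val = k ∧ p} = if k < n ∧ p then 1 else 0 := by
  split_ifs with h
  · exact Nat.card_eq_one_iff_exists.2
      ⟨⟨⟨k, h.1⟩, rfl, h.2⟩, fun u ↦ Subtype.ext (Fin.ext u.2.1)⟩
  · have : IsEmpty {u : Fin n // u.val = k ∧ p} :=
      ⟨fun u ↦ h ⟨u.2.1 ▸ u.1.isLt, u.2.2⟩⟩
    exact Nat.card_of_isEmpty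

theorem inDeg_pathOrientation (n : ℕ) (f : ℕ → Prop) [DecidablePred f] (i : ℕ)
    (hi : i < n) :
    inDeg (pathOrientation n f) ⟨i, hi⟩ =
      (if 0 < i ∧ f (i - 1) then 1 else 0) + (if i + 1 < n ∧ ¬ f i then 1 else 0) := by
  let left : Fin n → Prop := fun u ↦ u.val = i - 1 ∧ (0 < i ∧ f (i - 1))
  let right : Fin n → Prop := fun u ↦ u.val = i + 1 ∧ ¬ f i
  have hdisj : Disjoint left right := by
    rw [Pi.disjoint_iff]
    intro u
    simp only [left, right, Prop.disjoint_iff]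
    omega
  have hsplit : {u // pathOrientation n f u ⟨i, hi⟩} ≃ {u // left u} ⊕ {u // right u} :=
    (Equiv.subtypeEquivRight fun u ↦ by
      simp only [pathOrientation, left, right]
      constructor
      · rintro (⟨h, hf⟩ | ⟨h, hf⟩)
        · exact Or.inl ⟨by omega, by omega, by rwa [show i - 1 = u.val by omega]⟩
        · exact Or.inr ⟨h.symm, hf⟩
      · rintro (⟨h, hi0, hf⟩ | ⟨h, hf⟩)
        · exact Or.inl ⟨by omega, by rwa [h]⟩
        · exact Or.inr ⟨h.symm, hf⟩).trans
      (subtypeOrEquiv left right hdisj)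
  rw [inDeg, Nat.card_congr hsplit, Nat.card_sum, Fin.card_subtype_val_eq_and,
    Fin.card_subtype_val_eq_and]
  congr 1
  exact if_congr ⟨And.right, fun h ↦ ⟨by omega, h⟩⟩ rfl rfl

theorem isProper_pathGraph {n : ℕ} {D : Fin n → Fin n → Prop}
    (h : ∀ i (hi : i + 1 < n), inDeg D ⟨i, by omega⟩ ≠ inDeg D ⟨i + 1, hi⟩) :
    IsProper (pathGraph n) D := by
  rintro ⟨i, hi⟩ ⟨j, hj⟩ hij
  rcases pathGraph_adj.1 hij with rfl | rfl
  · exact h i hj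
  · exact (h j hi).symm

def forwardEdge (n i : ℕ) : Prop :=
  (i + 4 < n ∧ i % 3 ≠ 2) ∨ i + 3 = n

instance (n : ℕ) : DecidablePred (forwardEdge n) := fun i ↦ by
  unfold forwardEdge
  infer_instance

def inDegProfile (n i : ℕ) : ℕ :=
  if i + 1 = n then 0 else if i + 2 = n then 2 else if i + 3 = n then 0
  else if i + 4 = n then (if n % 3 = 1 then 1 else 2) else i % 3

theorem inDeg_pathOrientation_forwardEdge (n : ℕ) (hn : 3 ≤ n) (v : Fin n) :
    inDeg (pathOrientation n (forwardEdge n)) v = inDegProfile n v := by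
  rw [inDeg_pathOrientation]
  unfold inDegProfile forwardEdge
  split_ifs <;> omega

theorem inDegProfile_le_two (n i : ℕ) : inDegProfile n i ≤ 2 := by
  unfold inDegProfile
  split_ifs <;> omega

theorem inDegProfile_succ_ne (n i : ℕ) (hi : i + 1 < n) :
    inDegProfile n i ≠ inDegProfile n (i + 1) := by
  unfold inDegProfile
  split_ifs <;> omega

/-- Lemma 1(1): a path with at least 5 edges (`n ≥ 6` vertices). -/
theorem path_orientation_ge5 (n : ℕ) (hn : 6 ≤ n) :
    ∃ D : Fin n → Fin n → Prop,
      IsOrientation (SimpleGraph.pathGraph n) D ∧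
      IsProper (SimpleGraph.pathGraph n) D ∧
      (∀ v, inDeg D v ≤ 2) ∧
      inDeg D ⟨0, by omega⟩ = 0 ∧ inDeg D ⟨1, by omega⟩ = 1 ∧
      inDeg D ⟨n - 3, by omega⟩ = 0 ∧ inDeg D ⟨n - 2, by omega⟩ = 2 ∧
      inDeg D ⟨n - 1, by omega⟩ = 0 := by
  have hD := inDeg_pathOrientation_forwardEdge n (by omega)
  refine ⟨_, isOrientation_pathOrientation n (forwardEdge n),
    isProper_pathGraph fun i hi ↦ by rw [hD, hD]; exact inDegProfile_succ_ne n i hi,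
    fun v ↦ hD v ▸ inDegProfile_le_two n v, ?_, ?_, ?_, ?_, ?_⟩
  all_goals
    simp only [hD, inDegProfile]
    split_ifs <;> omega
end

section
/- Every path P = v₁…vₙ with at least 4 edges admits a proper orientation with maximum in-degree at most 2 such that d⁻(v₁)=0, d⁻(v₂)=2, d⁻(v_{n−1})=2, and d⁻(vₙ)=0. -/
/-!
Numbering the vertices from `0`, orienting the edge `v_i v_{i+1}` forwards exactly when `3 ∣ i`
produces the in-degree pattern `0, 2, 1, 0, 2, 1, …`, which is proper and starts with `0, 2`. Forcing the last two edges to point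
forwards and backwards respectively makes the pattern end in `2, 0`; according to `n mod 3` the
tail becomes `…, 1, 0, 2, 0`, `…, 0, 1, 2, 0` or `…, 0, 2, 0, 2, 0`, all still proper.
-/

open SimpleGraph

lemma Fin.ncard_setOf_val_eq_and {n : ℕ} (m : ℕ) (P : Prop) [Decidable P] :
    {u : Fin n | u.val = m ∧ P}.ncard = if m < n ∧ P then 1 else 0 := by
  split_ifs with h
  · rw [Set.ncard_eq_one]
    exact ⟨⟨m, h.1⟩, by ext u; simp [Fin.ext_iff, h.2]⟩
  · rw [Set.ncard_eq_zero]
    ext u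
    simp only [Set.mem_ofPred_eq, Set.mem_empty_iff_false, iff_false, not_and]
    exact fun hu hP => h ⟨hu ▸ u.isLt, hP⟩

namespace SimpleGraph.pathGraph

variable (r : ℕ → Prop) (n : ℕ)

def orient (u v : Fin n) : Prop :=
  (u.val + 1 = v.val ∧ r u.val) ∨ (v.val + 1 = u.val ∧ ¬ r v.val)

lemma isOrientation_orient : IsOrientation (pathGraph n) (orient r n) := by
  refine ⟨fun u v => ?_, ?_⟩
  · rw [pathGraph_adj]
    by_cases hu : r u.val <;> by_cases hv : r v.val <;> simp only [orient] <;> tauto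
  · rintro u v ⟨⟨huv, hu⟩ | ⟨hvu, hv⟩, ⟨hvu', hv'⟩ | ⟨huv', hu'⟩⟩ <;> first | omega | contradiction

def orientInDeg [DecidablePred r] (k : ℕ) : ℕ :=
  (if 0 < k ∧ r (k - 1) then 1 else 0) + (if k + 1 < n ∧ ¬ r k then 1 else 0)

lemma inDeg_orient [DecidablePred r] (v : Fin n) : inDeg (orient r n) v = orientInDeg r n v := by
  have hsplit : {u | orient r n u v} =
      {u : Fin n | u.val = v.val - 1 ∧ (0 < v.val ∧ r (v.val - 1))} ∪
        {u : Fin n | u.val = v.val + 1 ∧ ¬ r v.val} := by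
    ext u
    simp only [orient, Set.mem_ofPred_eq, Set.mem_union]
    constructor
    · rintro (⟨h, hr⟩ | h)
      · exact Or.inl ⟨by omega, by omega, by rwa [show v.val - 1 = u.val by omega]⟩
      · exact Or.inr ⟨h.1.symm, h.2⟩
    · rintro (⟨h, hv, hr⟩ | h)
      · exact Or.inl ⟨by omega, by rwa [h]⟩
      · exact Or.inr ⟨h.1.symm, h.2⟩
  have hdisj : Disjoint {u : Fin n | u.val = v.val - 1 ∧ (0 < v.val ∧ r (v.val - 1))}
      {u : Fin n | u.val = v.val + 1 ∧ ¬ r v.val} :=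
    Set.disjoint_left.mpr fun u hl hr => by simp only [Set.mem_ofPred_eq] at hl hr; omega
  change Set.ncard {u | orient r n u v} = _
  rw [hsplit, Set.ncard_union_eq hdisj, Fin.ncard_setOf_val_eq_and, Fin.ncard_setOf_val_eq_and,
    orientInDeg]
  congr 1
  exact if_congr ⟨fun h => h.2, fun h => ⟨by omega, h⟩⟩ rfl rfl

lemma inDeg_orient_le_two (v : Fin n) : inDeg (orient r n) v ≤ 2 := by
  classical
  rw [inDeg_orient, orientInDeg]
  split_ifs <;> omega

lemma isProper_orient [DecidablePred r]
    (h : ∀ k, k + 1 < n → orientInDeg r n k ≠ orientInDeg r n (k + 1)) :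
    IsProper (pathGraph n) (orient r n) := by
  intro u v huv
  rw [inDeg_orient, inDeg_orient]
  rcases pathGraph_adj.mp huv with h' | h'
  · rw [← h']
    exact h u.val (h' ▸ v.isLt)
  · rw [← h']
    exact (h v.val (h' ▸ u.isLt)).symm

end SimpleGraph.pathGraph

open SimpleGraph.pathGraph

def edgeForward (n i : ℕ) : Prop :=
  i % 3 = 0 ∧ i + 2 ≠ n ∨ i + 3 = n

instance (n : ℕ) : DecidablePred (edgeForward n) := fun _ => by
  unfold edgeForward
  infer_instance

lemma orientInDeg_edgeForward_ne {n k : ℕ} (hn : 5 ≤ n) (hk : k + 1 < n) :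
    orientInDeg (edgeForward n) n k ≠ orientInDeg (edgeForward n) n (k + 1) := by
  unfold orientInDeg edgeForward
  split_ifs <;> omega

lemma orientInDeg_edgeForward_ends {n : ℕ} (hn : 5 ≤ n) :
    orientInDeg (edgeForward n) n 0 = 0 ∧ orientInDeg (edgeForward n) n 1 = 2 ∧
      orientInDeg (edgeForward n) n (n - 2) = 2 ∧ orientInDeg (edgeForward n) n (n - 1) = 0 := by
  unfold orientInDeg edgeForward
  grind

/-- Lemma 2: a path with at least 4 edges (`n ≥ 5` vertices). -/
theorem path_orientation_0_2_2_0 (n : ℕ) (hn : 5 ≤ n) :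
    ∃ D : Fin n → Fin n → Prop,
      IsOrientation (SimpleGraph.pathGraph n) D ∧
      IsProper (SimpleGraph.pathGraph n) D ∧
      (∀ v, inDeg D v ≤ 2) ∧
      inDeg D ⟨0, by omega⟩ = 0 ∧ inDeg D ⟨1, by omega⟩ = 2 ∧
      inDeg D ⟨n - 2, by omega⟩ = 2 ∧ inDeg D ⟨n - 1, by omega⟩ = 0 := by
  refine ⟨orient (edgeForward n) n, isOrientation_orient _ n,
    isProper_orient _ n fun k hk => orientInDeg_edgeForward_ne hn hk,
    inDeg_orient_le_two _ n, ?_⟩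
  simpa only [inDeg_orient] using orientInDeg_edgeForward_ends hn
end

section
/- Every path P = v₁…vₙ with an odd number of edges ‖P‖ ≥ 5 admits a proper orientation with maximum in-degree at most 2 such that d⁻(v₁)=0, d⁻(v₂)=2, d⁻(v_{n−2})=0, d⁻(v_{n−1})=2, and d⁻(vₙ)=0. -/
open SimpleGraph

/-- edge `i` (between `i` and `i+1`) points right iff `myR n i`. -/
def myR (n i : ℕ) : Prop := (Even i ∧ i + 5 ≤ n) ∨ i + 3 = n

/-- the orientation: `myD n u v` means the edge `uv` is directed from `u` to `v`. -/
def myD (n : ℕ) (u v : Fin n) : Prop :=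
  (u.val + 1 = v.val ∧ myR n u.val) ∨ (v.val + 1 = u.val ∧ ¬ myR n v.val)

instance (n i : ℕ) : Decidable (myR n i) := by unfold myR; infer_instance

/-- intended in-degree of vertex `i`. -/
def myG (n i : ℕ) : ℕ :=
  if i + 5 ≤ n ∧ Odd i then 2 else if i + 4 = n then 1 else if i + 2 = n then 2 else 0

lemma inDeg_formula (n : ℕ) (v : Fin n) :
    inDeg (myD n) v = (if 1 ≤ v.val ∧ myR n (v.val - 1) then 1 else 0)
      + (if v.val + 2 ≤ n ∧ ¬ myR n v.val then 1 else 0) := by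
  have key : inDeg (myD n) v = Set.ncard {u : Fin n | myD n u v} := by
    rw [inDeg, ← Nat.card_coe_set_eq]
    rfl
  rw [key]
  split_ifs with h1 h2 h2
  · have hset : {u : Fin n | myD n u v} =
        {⟨v.val - 1, by omega⟩, ⟨v.val + 1, by omega⟩} := by
      ext u
      simp only [Set.mem_setOf_eq, Set.mem_insert_iff, Set.mem_singleton_iff, myD, Fin.ext_iff]
      constructor
      · rintro (⟨h, _⟩ | ⟨h, _⟩)
        · left; omega
        · right; omega
      · rintro (h | h)
        · exact Or.inl ⟨by omega, by rw [h]; exact h1.2⟩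
        · exact Or.inr ⟨by omega, by exact h2.2⟩
    rw [hset, Set.ncard_pair (by simp only [ne_eq, Fin.mk.injEq]; omega)]
  · have hset : {u : Fin n | myD n u v} = {⟨v.val - 1, by omega⟩} := by
      ext u
      simp only [Set.mem_setOf_eq, Set.mem_singleton_iff, myD, Fin.ext_iff]
      constructor
      · rintro (⟨h, _⟩ | ⟨h, hr⟩)
        · omega
        · exact absurd ⟨by omega, hr⟩ h2
      · intro h
        exact Or.inl ⟨by omega, by rw [h]; exact h1.2⟩
    rw [hset, Set.ncard_singleton]
  · have hset : {u : Fin n | myD n u v} = {⟨v.val + 1, by omega⟩} := by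
      ext u
      simp only [Set.mem_setOf_eq, Set.mem_singleton_iff, myD, Fin.ext_iff]
      constructor
      · rintro (⟨h, hr⟩ | ⟨h, _⟩)
        · exact absurd ⟨by omega, by have : u.val = v.val - 1 := by omega
                                     rwa [← this]⟩ h1
        · omega
      · intro h
        exact Or.inr ⟨by omega, h2.2⟩
    rw [hset, Set.ncard_singleton]
  · have hset : {u : Fin n | myD n u v} = ∅ := by
      ext u
      simp only [Set.mem_setOf_eq, Set.mem_empty_iff_false, iff_false, myD]
      rintro (⟨h, hr⟩ | ⟨h, hr⟩)
      · exact h1 ⟨by omega, by have : u.val = v.val - 1 := by omega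
                               rwa [← this]⟩
      · exact h2 ⟨by omega, hr⟩
    rw [hset, Set.ncard_empty]

lemma inDeg_myG (n : ℕ) (hn : 6 ≤ n) (hpar : n % 2 = 0) (v : Fin n) :
    inDeg (myD n) v = myG n v.val := by
  rw [inDeg_formula]
  have hv : v.val < n := v.isLt
  simp only [myG, myR, Nat.even_iff, Nat.odd_iff]
  split_ifs <;> first | omega | (simp_all; omega) | simp_all

/-- Lemma 4(1): a path with an odd number of edges, at least 5. -/
theorem path_orientation_odd_02_020 (n : ℕ) (hn : 5 ≤ n - 1) (hodd : Odd (n - 1)) :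
    ∃ D : Fin n → Fin n → Prop,
      IsOrientation (SimpleGraph.pathGraph n) D ∧
      IsProper (SimpleGraph.pathGraph n) D ∧
      (∀ v, inDeg D v ≤ 2) ∧
      inDeg D ⟨0, by omega⟩ = 0 ∧ inDeg D ⟨1, by omega⟩ = 2 ∧
      inDeg D ⟨n - 3, by omega⟩ = 0 ∧ inDeg D ⟨n - 2, by omega⟩ = 2 ∧
      inDeg D ⟨n - 1, by omega⟩ = 0 := by
  have hodd' := Nat.odd_iff.mp hodd
  have hn6 : 6 ≤ n := by omega
  have hpar : n % 2 = 0 := by omega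
  refine ⟨myD n, ⟨?_, ?_⟩, ?_, ?_, ?_, ?_, ?_, ?_, ?_⟩
  · intro u v
    rw [SimpleGraph.pathGraph_adj]
    simp only [myD]
    by_cases h1 : myR n u.val <;> by_cases h2 : myR n v.val <;> tauto
  · rintro u v ⟨hd1, hd2⟩
    rcases hd1 with ⟨h, hr⟩ | ⟨h, hr⟩ <;> rcases hd2 with ⟨h', hr'⟩ | ⟨h', hr'⟩ <;>
      first | omega | exact hr' hr | exact hr hr'
  · intro u v hadj
    rw [SimpleGraph.pathGraph_adj] at hadj
    rw [inDeg_myG n hn6 hpar, inDeg_myG n hn6 hpar]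
    have hu := u.isLt
    have hv := v.isLt
    simp only [myG, Nat.odd_iff]
    split_ifs <;> first | omega | (simp_all; omega) | simp_all
  · intro v
    rw [inDeg_myG n hn6 hpar]
    simp only [myG, Nat.odd_iff]
    split_ifs <;> first | omega | (simp_all; omega) | simp_all
  · rw [inDeg_myG n hn6 hpar]; show myG n 0 = 0
    simp only [myG, Nat.odd_iff]; split_ifs <;> first | omega | (simp_all; omega) | simp_all
  · rw [inDeg_myG n hn6 hpar]; show myG n 1 = 2
    simp only [myG, Nat.odd_iff]; split_ifs <;> first | omega | (simp_all; omega) | simp_all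
  · rw [inDeg_myG n hn6 hpar]; show myG n (n - 3) = 0
    simp only [myG, Nat.odd_iff]; split_ifs <;> first | omega | (simp_all; omega) | simp_all
  · rw [inDeg_myG n hn6 hpar]; show myG n (n - 2) = 2
    simp only [myG, Nat.odd_iff]; split_ifs <;> first | omega | (simp_all; omega) | simp_all
  · rw [inDeg_myG n hn6 hpar]; show myG n (n - 1) = 0
    simp only [myG, Nat.odd_iff]; split_ifs <;> first | omega | (simp_all; omega) | simp_all
end

section
/- Every path P = v₁…vₙ with an even number of edges ‖P‖ ≥ 6 admits a proper orientation with maximum in-degree at most 2 such that d⁻(v₁)=0, d⁻(v₂)=2, d⁻(v_{n−1})=1, and d⁻(vₙ)=0. -/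
open SimpleGraph

/-- Direction rule: edge `i` (between vertices `i` and `i+1`) points right iff `Rdir n i`. -/
def Rdir (n i : ℕ) : Prop := (i % 2 = 0 ∧ i ≠ n - 3) ∨ i = n - 4

/-- Explicit orientation of the path graph. -/
def Dor (n : ℕ) (u v : Fin n) : Prop :=
  (u.val + 1 = v.val ∧ Rdir n u.val) ∨ (v.val + 1 = u.val ∧ ¬ Rdir n v.val)

/-- The target in-degree sequence. -/
def fdeg (n i : ℕ) : ℕ :=
  if i = n - 4 then 1 else if i = n - 3 then 2 else if i = n - 2 then 1
  else if i = n - 1 then 0 else if i % 2 = 1 then 2 else 0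

lemma card_subtype_zero {α : Type*} (P : α → Prop) (h : ∀ x, ¬ P x) :
    Nat.card {x // P x} = 0 := by
  have hs : Nat.card {x // P x} = Set.ncard {x | P x} := Nat.card_coe_set_eq _
  have : {x | P x} = ∅ := by ext x; simp [h x]
  rw [hs, this, Set.ncard_empty]

lemma card_subtype_one {α : Type*} (P : α → Prop) (a : α) (h : ∀ x, P x ↔ x = a) :
    Nat.card {x // P x} = 1 := by
  have hs : Nat.card {x // P x} = Set.ncard {x | P x} := Nat.card_coe_set_eq _
  have : {x | P x} = {a} := by ext x; simp [h x]
  rw [hs, this, Set.ncard_singleton]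

lemma card_subtype_two {α : Type*} (P : α → Prop) (a b : α) (hab : a ≠ b)
    (h : ∀ x, P x ↔ x = a ∨ x = b) : Nat.card {x // P x} = 2 := by
  have hs : Nat.card {x // P x} = Set.ncard {x | P x} := Nat.card_coe_set_eq _
  have : {x | P x} = {a, b} := by ext x; simp [h x]
  rw [hs, this, Set.ncard_pair hab]

lemma inDeg_Dor (n : ℕ) (hn7 : 7 ≤ n) (hodd : n % 2 = 1) (v : Fin n) :
    inDeg (Dor n) v = fdeg n v.val := by
  obtain ⟨j, hj⟩ := v
  show Nat.card {u : Fin n // Dor n u ⟨j, hj⟩} = fdeg n j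
  by_cases hA : j = 0
  · rw [card_subtype_zero]
    · simp only [fdeg]; split_ifs <;> omega
    · intro u; simp only [Dor, Rdir]; omega
  by_cases hG : j = n - 1
  · rw [card_subtype_zero]
    · simp only [fdeg]; split_ifs <;> omega
    · intro ⟨u, hu⟩; simp only [Dor, Rdir]; omega
  by_cases hF : j = n - 2
  · rw [card_subtype_one (a := ⟨j + 1, by omega⟩)]
    · simp only [fdeg]; split_ifs <;> omega
    · intro ⟨u, hu⟩; simp only [Dor, Rdir, Fin.mk.injEq]; omega
  by_cases hE : j = n - 3
  · rw [card_subtype_two (a := ⟨j - 1, by omega⟩) (b := ⟨j + 1, by omega⟩)]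
    · simp only [fdeg]; split_ifs <;> omega
    · simp only [Ne, Fin.mk.injEq]; omega
    · intro ⟨u, hu⟩; simp only [Dor, Rdir, Fin.mk.injEq]; omega
  by_cases hD : j = n - 4
  · rw [card_subtype_one (a := ⟨j - 1, by omega⟩)]
    · simp only [fdeg]; split_ifs <;> omega
    · intro ⟨u, hu⟩; simp only [Dor, Rdir, Fin.mk.injEq]; omega
  -- now 1 ≤ j ≤ n - 5
  have hle : 1 ≤ j ∧ j ≤ n - 5 := by omega
  by_cases hB : j % 2 = 1
  · rw [card_subtype_two (a := ⟨j - 1, by omega⟩) (b := ⟨j + 1, by omega⟩)]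
    · simp only [fdeg]; split_ifs <;> omega
    · simp only [Ne, Fin.mk.injEq]; omega
    · intro ⟨u, hu⟩; simp only [Dor, Rdir, Fin.mk.injEq]; omega
  · rw [card_subtype_zero]
    · simp only [fdeg]; split_ifs <;> omega
    · intro ⟨u, hu⟩; simp only [Dor, Rdir]; omega

lemma fdeg_step (n j : ℕ) (hn7 : 7 ≤ n) (hodd : n % 2 = 1) (h : j + 1 ≤ n - 1) :
    fdeg n j ≠ fdeg n (j + 1) := by
  simp only [fdeg]; split_ifs <;> omega

/-- Lemma 4(2): a path with an even number of edges, at least 6. -/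
theorem path_orientation_even_02_10 (n : ℕ) (hn : 6 ≤ n - 1) (heven : Even (n - 1)) :
    ∃ D : Fin n → Fin n → Prop,
      IsOrientation (SimpleGraph.pathGraph n) D ∧
      IsProper (SimpleGraph.pathGraph n) D ∧
      (∀ v, inDeg D v ≤ 2) ∧
      inDeg D ⟨0, by omega⟩ = 0 ∧ inDeg D ⟨1, by omega⟩ = 2 ∧
      inDeg D ⟨n - 2, by omega⟩ = 1 ∧ inDeg D ⟨n - 1, by omega⟩ = 0 := by
  have hn7 : 7 ≤ n := by omega
  obtain ⟨k, hk⟩ := heven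
  have hodd : n % 2 = 1 := by omega
  refine ⟨Dor n, ⟨?_, ?_⟩, ?_, ?_, ?_, ?_, ?_, ?_⟩
  · intro u v
    rw [pathGraph_adj]
    simp only [Dor, Rdir]
    omega
  · intro u v
    simp only [Dor, Rdir]
    omega
  · intro u v huv
    rw [inDeg_Dor n hn7 hodd, inDeg_Dor n hn7 hodd]
    rw [pathGraph_adj] at huv
    rcases huv with h | h
    · rw [← h]; exact fdeg_step n u.val hn7 hodd (by omega)
    · rw [← h]; exact (fdeg_step n v.val hn7 hodd (by omega)).symm
  · intro v
    rw [inDeg_Dor n hn7 hodd]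
    simp only [fdeg]; split_ifs <;> omega
  · rw [inDeg_Dor n hn7 hodd]; simp only [fdeg]
    split_ifs <;> first | contradiction | omega
  · rw [inDeg_Dor n hn7 hodd]; simp only [fdeg]
    split_ifs <;> first | contradiction | omega
  · rw [inDeg_Dor n hn7 hodd]; simp only [fdeg]
    split_ifs <;> first | contradiction | omega
  · rw [inDeg_Dor n hn7 hodd]; simp only [fdeg]
    split_ifs <;> first | contradiction | omega
end

section
/- Every path P = v₁…vₙ with an even number of edges ‖P‖ ≥ 4 admits a proper orientation with maximum in-degree at most 2 such that d⁻(v₁)=0, d⁻(v₂)=1, d⁻(v_{n−1})=1, and d⁻(vₙ)=0. -/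
open SimpleGraph

/-!
Label the vertices `0, 1, 2, 1, 0, 1, 2, 1, …` and orient every edge towards its endpoint with the
larger label. Then the in-degree of a vertex is the number of its neighbours with a smaller label,
which is exactly its own label; so adjacent vertices get distinct in-degrees, all at most `2`, and
the ends read `0, 1, …, 1, 0` when `n - 1 ≡ 0 (mod 4)`. When `n - 1 ≡ 2 (mod 4)` the last four
labels are replaced by `0, 2, 1, 0`, which keeps every label equal to its number of smaller
neighbours.
-/

def towardLarger {V : Type*} (G : SimpleGraph V) (f : V → ℕ) (u v : V) : Prop :=
  G.Adj u v ∧ f u < f v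

section TowardLarger

variable {V : Type*} {G : SimpleGraph V} {f : V → ℕ}

lemma isOrientation_towardLarger (hf : ∀ u v, G.Adj u v → f u ≠ f v) :
    IsOrientation G (towardLarger G f) := by
  refine ⟨fun u v => ⟨fun h => ?_, ?_⟩, fun u v h => lt_asymm h.1.2 h.2.2⟩
  · rcases (hf u v h).lt_or_gt with hlt | hlt
    exacts [Or.inl ⟨h, hlt⟩, Or.inr ⟨h.symm, hlt⟩]
  · rintro (h | h)
    exacts [h.1, h.1.symm]

lemma inDeg_towardLarger (hf : ∀ v, Nat.card {u // G.Adj u v ∧ f u < f v} = f v) (v : V) :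
    inDeg (towardLarger G f) v = f v :=
  hf v

lemma isProper_towardLarger (hf : ∀ u v, G.Adj u v → f u ≠ f v)
    (hcount : ∀ v, Nat.card {u // G.Adj u v ∧ f u < f v} = f v) :
    IsProper G (towardLarger G f) := by
  intro u v h
  rw [inDeg_towardLarger hcount, inDeg_towardLarger hcount]
  exact hf u v h

end TowardLarger

lemma Fin.natCard_subtype_val_eq_ite {n k : ℕ} (Q : ℕ → Prop) [DecidablePred Q]
    (hQ : ∀ j, Q j → j = k) :
    Nat.card {u : Fin n // Q u} = if k < n ∧ Q k then 1 else 0 := by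
  split_ifs with h
  · rw [Nat.card_eq_one_iff_exists]
    exact ⟨⟨⟨k, h.1⟩, h.2⟩, fun u => Subtype.ext (Fin.ext (hQ _ u.2))⟩
  · rw [Nat.card_eq_zero]
    exact Or.inl ⟨fun u => h (hQ _ u.2 ▸ ⟨u.1.2, u.2⟩)⟩

lemma card_pathGraph_adj_and {n : ℕ} (v : Fin n) (P : ℕ → Prop) [DecidablePred P] :
    Nat.card {u : Fin n // (pathGraph n).Adj u v ∧ P u} =
      (if 0 < v.1 ∧ P (v.1 - 1) then 1 else 0) +
        (if v.1 + 1 < n ∧ P (v.1 + 1) then 1 else 0) := by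
  let below : Fin n → Prop := fun u => u.1 + 1 = v.1 ∧ P u
  let above : Fin n → Prop := fun u => u.1 = v.1 + 1 ∧ P u
  have hdisj : Disjoint below above := by
    rw [Pi.disjoint_iff]
    intro u
    simp only [below, above, Prop.disjoint_iff]
    omega
  have hbelow : Nat.card {u // below u} = if 0 < v.1 ∧ P (v.1 - 1) then 1 else 0 := by
    rw [Fin.natCard_subtype_val_eq_ite _
      fun j (h : j + 1 = v.1 ∧ P j) => (by omega : j = v.1 - 1)]
    grind
  have habove : Nat.card {u // above u} = if v.1 + 1 < n ∧ P (v.1 + 1) then 1 else 0 := by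
    rw [Fin.natCard_subtype_val_eq_ite _ fun j (h : j = v.1 + 1 ∧ P j) => h.1]
    grind
  rw [← hbelow, ← habove, ← Nat.card_sum,
    ← Nat.card_congr (subtypeOrEquiv below above hdisj)]
  exact Nat.card_congr (Equiv.subtypeEquivRight fun u => by grind [pathGraph_adj])

def zigzag (k : ℕ) : ℕ := min (k % 4) (4 - k % 4)

def pathLabel (n v : ℕ) : ℕ := if n % 4 = 3 ∧ n - 4 ≤ v then (n - 1 - v) % 3 else zigzag v

lemma pathLabel_le_two (n v : ℕ) : pathLabel n v ≤ 2 := by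
  unfold pathLabel zigzag
  split_ifs <;> omega

lemma pathLabel_succ_ne {n v : ℕ} (hv : v + 1 < n) : pathLabel n v ≠ pathLabel n (v + 1) := by
  unfold pathLabel zigzag
  split_ifs <;> omega

lemma pathLabel_eq_card_smaller_neighbors {n v : ℕ} (hn : 5 ≤ n) (hodd : n % 2 = 1)
    (hv : v < n) :
    (if 0 < v ∧ pathLabel n (v - 1) < pathLabel n v then 1 else 0) +
      (if v + 1 < n ∧ pathLabel n (v + 1) < pathLabel n v then 1 else 0) = pathLabel n v := by
  unfold pathLabel zigzag
  split_ifs <;> omega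

lemma pathLabel_ends {n : ℕ} (hn : 5 ≤ n) (hodd : n % 2 = 1) :
    pathLabel n 0 = 0 ∧ pathLabel n 1 = 1 ∧
      pathLabel n (n - 2) = 1 ∧ pathLabel n (n - 1) = 0 := by
  unfold pathLabel zigzag
  refine ⟨?_, ?_, ?_, ?_⟩ <;> split_ifs <;> omega

/-- Lemma 5(2): a path with an even number of edges, at least 4. -/
theorem path_orientation_even_01_10 (n : ℕ) (hn : 4 ≤ n - 1) (heven : Even (n - 1)) :
    ∃ D : Fin n → Fin n → Prop,
      IsOrientation (SimpleGraph.pathGraph n) D ∧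
      IsProper (SimpleGraph.pathGraph n) D ∧
      (∀ v, inDeg D v ≤ 2) ∧
      inDeg D ⟨0, by omega⟩ = 0 ∧ inDeg D ⟨1, by omega⟩ = 1 ∧
      inDeg D ⟨n - 2, by omega⟩ = 1 ∧ inDeg D ⟨n - 1, by omega⟩ = 0 := by
  have h5 : 5 ≤ n := by omega
  have hodd : n % 2 = 1 := by obtain ⟨k, hk⟩ := heven; omega
  set f : Fin n → ℕ := fun v => pathLabel n v
  have hne : ∀ u v, (pathGraph n).Adj u v → f u ≠ f v := by
    intro u v huv
    rcases pathGraph_adj.1 huv with h | h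
    · simpa only [f, ← h] using pathLabel_succ_ne (h ▸ v.2)
    · simpa only [f, ← h] using (pathLabel_succ_ne (h ▸ u.2)).symm
  have hcount : ∀ v, Nat.card {u // (pathGraph n).Adj u v ∧ f u < f v} = f v := fun v =>
    (card_pathGraph_adj_and v (pathLabel n · < f v)).trans
      (pathLabel_eq_card_smaller_neighbors h5 hodd v.2)
  obtain ⟨h0, h1, h2, h3⟩ := pathLabel_ends h5 hodd
  refine ⟨towardLarger _ f, isOrientation_towardLarger hne, isProper_towardLarger hne hcount,
    fun v => ?_, ?_, ?_, ?_, ?_⟩ <;> rw [inDeg_towardLarger hcount]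
  exacts [pathLabel_le_two n v, h0, h1, h2, h3]
end

section
/- Let G be the graph consisting of a 5-cycle C₅ together with, for each of its 5 edges {a,b}, an internally disjoint path of length 4 between a and b. Then G has no proper orientation with maximum in-degree at most 2; consequently χ⃗(G) = 3. -/
open SimpleGraph

/-- Vertices: the 5-cycle `ZMod 5`, plus for each cycle edge `{i, i+1}` three
internal vertices `(i,0), (i,1), (i,2)` of an attached path of length 4. -/
abbrev FanV : Type := ZMod 5 ⊕ (ZMod 5 × Fin 3)

/-- Base relation: cycle edges `i ~ i+1`, and for each `i` the path
`i ~ (i,0) ~ (i,1) ~ (i,2) ~ i+1`. -/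
def fanRel : FanV → FanV → Prop
  | Sum.inl i, Sum.inl j => j = i + 1
  | Sum.inl i, Sum.inr (j, k) => j = i ∧ k = 0
  | Sum.inr (j, k), Sum.inl i => i = j + 1 ∧ k = 2
  | Sum.inr (j, k), Sum.inr (j', k') => j = j' ∧ k'.val = k.val + 1

/-- The 5-cycle with a path of length 4 attached to each of its edges. -/
def fanGraph : SimpleGraph FanV := SimpleGraph.fromRel fanRel

instance : DecidableRel fanRel := fun u v =>
  match u, v with
  | Sum.inl i, Sum.inl j => inferInstanceAs (Decidable (j = i + 1))
  | Sum.inl i, Sum.inr (j, k) => inferInstanceAs (Decidable (j = i ∧ k = 0))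
  | Sum.inr (j, k), Sum.inl i => inferInstanceAs (Decidable (i = j + 1 ∧ k = 2))
  | Sum.inr (j, k), Sum.inr (j', k') => inferInstanceAs (Decidable (j = j' ∧ k'.val = k.val + 1))

instance : DecidableRel fanGraph.Adj := fun u v =>
  decidable_of_iff _ (SimpleGraph.fromRel_adj fanRel u v).symm

/-- In-degree of an internal path vertex whose incident path-edge bits are `x`, `y`
(`x` = previous edge oriented towards the vertex? encoded as forward bits). -/
def gA (x y : Bool) : ℕ := x.toNat + (!y).toNat

/-- In-degree of the cycle vertex `i` from forward bits of its four incident edges. -/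
def pV (fp ff dp aa : Bool) : ℕ := fp.toNat + (!ff).toNat + dp.toNat + (!aa).toNat


set_option maxHeartbeats 4000000 in
set_option maxRecDepth 100000 in
set_option synthInstance.maxHeartbeats 2000000 in
set_option synthInstance.maxSize 100000 in
theorem key : ∀ f0 f1 f2 f3 f4 : Bool, ∀ a0 b0 c0 d0 : Bool,
    gA a0 b0 ≠ gA b0 c0 → gA b0 c0 ≠ gA c0 d0 →
    ∀ a1 b1 c1 d1 : Bool,
    gA a1 b1 ≠ gA b1 c1 → gA b1 c1 ≠ gA c1 d1 →
    pV f0 f1 d0 a1 ≤ 2 → pV f0 f1 d0 a1 ≠ gA a1 b1 → gA c0 d0 ≠ pV f0 f1 d0 a1 →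
    ∀ a2 b2 c2 d2 : Bool,
    gA a2 b2 ≠ gA b2 c2 → gA b2 c2 ≠ gA c2 d2 →
    pV f1 f2 d1 a2 ≤ 2 → pV f1 f2 d1 a2 ≠ gA a2 b2 → gA c1 d1 ≠ pV f1 f2 d1 a2 →
    pV f0 f1 d0 a1 ≠ pV f1 f2 d1 a2 →
    ∀ a3 b3 c3 d3 : Bool,
    gA a3 b3 ≠ gA b3 c3 → gA b3 c3 ≠ gA c3 d3 →
    pV f2 f3 d2 a3 ≤ 2 → pV f2 f3 d2 a3 ≠ gA a3 b3 → gA c2 d2 ≠ pV f2 f3 d2 a3 →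
    pV f1 f2 d1 a2 ≠ pV f2 f3 d2 a3 →
    ∀ a4 b4 c4 d4 : Bool,
    gA a4 b4 ≠ gA b4 c4 → gA b4 c4 ≠ gA c4 d4 →
    pV f3 f4 d3 a4 ≤ 2 → pV f3 f4 d3 a4 ≠ gA a4 b4 → gA c3 d3 ≠ pV f3 f4 d3 a4 →
    pV f2 f3 d2 a3 ≠ pV f3 f4 d3 a4 →
    pV f4 f0 d4 a0 ≤ 2 → pV f4 f0 d4 a0 ≠ gA a0 b0 → gA c4 d4 ≠ pV f4 f0 d4 a0 →
    pV f3 f4 d3 a4 ≠ pV f4 f0 d4 a0 → pV f4 f0 d4 a0 ≠ pV f0 f1 d0 a1 →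
    False := by decide


lemma inDeg_eq_card (b : FanV → FanV → Bool) (v : FanV) :
    inDeg (fun u v => b u v = true) v
      = (Finset.univ.filter fun u => b u v = true).card := by
  rw [inDeg, Nat.card_eq_fintype_card, Fintype.card_subtype]

lemma cnt_two (b : FanV → FanV → Bool) (v x y : FanV) (hxy : x ≠ y)
    (h : ∀ u, b u v = true → u = x ∨ u = y) :
    (Finset.univ.filter fun u => b u v = true).card = (b x v).toNat + (b y v).toNat := by
  have he : (Finset.univ.filter fun u => b u v = true)
      = ({x, y} : Finset FanV).filter (fun u => b u v = true) := by
    ext u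
    simp only [Finset.mem_filter, Finset.mem_univ, true_and, Finset.mem_insert,
      Finset.mem_singleton]
    exact ⟨fun hu => ⟨h u hu, hu⟩, And.right⟩
  rw [he, Finset.card_filter, Finset.sum_pair hxy]
  cases b x v <;> cases b y v <;> rfl

lemma cnt_four (b : FanV → FanV → Bool) (v x y z w : FanV)
    (h1 : x ≠ y) (h2 : x ≠ z) (h3 : x ≠ w) (h4 : y ≠ z) (h5 : y ≠ w) (h6 : z ≠ w)
    (h : ∀ u, b u v = true → u = x ∨ u = y ∨ u = z ∨ u = w) :
    (Finset.univ.filter fun u => b u v = true).card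
      = (b x v).toNat + (b y v).toNat + (b z v).toNat + (b w v).toNat := by
  have he : (Finset.univ.filter fun u => b u v = true)
      = ({x, y, z, w} : Finset FanV).filter (fun u => b u v = true) := by
    ext u
    simp only [Finset.mem_filter, Finset.mem_univ, true_and, Finset.mem_insert,
      Finset.mem_singleton]
    exact ⟨fun hu => ⟨h u hu, hu⟩, And.right⟩
  rw [he, Finset.card_filter]
  rw [Finset.sum_insert (by simp [h1, h2, h3]), Finset.sum_insert (by simp [h4, h5]),
    Finset.sum_pair h6]
  cases b x v <;> cases b y v <;> cases b z v <;> cases b w v <;> rfl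

/-- An explicit orientation realizing maximum in-degree 3. -/
def dor : FanV → FanV → Bool
  | .inl j, .inl i => decide (j = i + 1)
  | .inl i, .inr (j, k) =>
      (decide (k = 2) && decide (i = j + 1) && (decide (j = 0) || decide (j = 2) || decide (j = 4)))
      || (decide (k = 0) && decide (i = j) && (decide (j = 1) || decide (j = 3)))
  | .inr (j, k), .inl i =>
      (decide (k = 0) && decide (i = j) && (decide (j = 0) || decide (j = 2) || decide (j = 4)))
      || (decide (k = 2) && decide (i = j + 1) && (decide (j = 1) || decide (j = 3)))
  | .inr (j, k), .inr (j', k') => decide (j = j') && (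
      ((decide (j = 0) || decide (j = 2)) && decide (k = 1) && (decide (k' = 0) || decide (k' = 2)))
      || ((decide (j = 1) || decide (j = 3)) && ((decide (k = 1) && decide (k' = 0)) || (decide (k = 2) && decide (k' = 1))))
      || (decide (j = 4) && ((decide (k = 0) && decide (k' = 1)) || (decide (k = 2) && decide (k' = 1)))))

def cnt (v : FanV) : ℕ := (Finset.univ.filter fun u => dor u v = true).card


set_option maxHeartbeats 1000000 in
/-- This graph has no proper orientation with max in-degree ≤ 2, but has one with
max in-degree ≤ 3; hence its proper orientation number is exactly 3. -/
theorem fanGraph_pon_eq_three :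
    (¬ ∃ D : FanV → FanV → Prop, IsOrientation fanGraph D ∧ IsProper fanGraph D ∧
        ∀ v, inDeg D v ≤ 2) ∧
    (∃ D : FanV → FanV → Prop, IsOrientation fanGraph D ∧ IsProper fanGraph D ∧
        ∀ v, inDeg D v ≤ 3) := by
  constructor
  · rintro ⟨D, hOr, hProp, hB⟩
    classical
    set b : FanV → FanV → Bool := fun u v => decide (D u v) with hbdef
    have hb : ∀ u v, D u v ↔ b u v = true := fun u v =>
      ⟨fun h => decide_eq_true h, fun h => of_decide_eq_true h⟩
    have hsupp : ∀ u v, b u v = true → fanGraph.Adj u v := fun u v h =>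
      (hOr.1 u v).mpr (Or.inl ((hb u v).mpr h))
    have hflip : ∀ u v, fanGraph.Adj u v → b v u = !(b u v) := by
      intro u v h
      cases hbuv : b u v with
      | true =>
          have hnd : ¬ D v u := fun h' => hOr.2 u v ⟨(hb u v).mpr hbuv, h'⟩
          simp only [Bool.not_true]
          cases hbvu : b v u with
          | true => exact absurd ((hb v u).mpr hbvu) hnd
          | false => rfl
      | false =>
          have hD : D v u := by
            rcases (hOr.1 u v).mp h with h1 | h2
            · exact absurd ((hb u v).mp h1) (by simp [hbuv])
            · exact h2
          simp only [Bool.not_false]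
          exact (hb v u).mp hD
    have hind : ∀ v, inDeg D v = (Finset.univ.filter fun u => b u v = true).card := by
      intro v
      have h1 : inDeg D v = inDeg (fun u v => b u v = true) v :=
        Nat.card_congr (Equiv.subtypeEquivRight fun u => hb u v)
      rw [h1, inDeg_eq_card]
    have eP0 : inDeg D (Sum.inl 0 : FanV) = pV (b (Sum.inl 4 : FanV) (Sum.inl 0 : FanV)) (b (Sum.inl 0 : FanV) (Sum.inl 1 : FanV)) (b (Sum.inr (4, 2) : FanV) (Sum.inl 0 : FanV)) (b (Sum.inl 0 : FanV) (Sum.inr (0, 0) : FanV)) := by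
      rw [hind, cnt_four b (Sum.inl 0 : FanV) (Sum.inl 4 : FanV) (Sum.inl 1 : FanV) (Sum.inr (4, 2) : FanV) (Sum.inr (0, 0) : FanV)
        (by decide) (by decide) (by decide) (by decide) (by decide) (by decide)
        (fun u hu => (by decide :
          ∀ u : FanV, fanGraph.Adj u (Sum.inl 0 : FanV) → u = (Sum.inl 4 : FanV) ∨ u = (Sum.inl 1 : FanV) ∨ u = (Sum.inr (4, 2) : FanV) ∨ u = (Sum.inr (0, 0) : FanV))
          u (hsupp u _ hu)),
        hflip (Sum.inl 0 : FanV) (Sum.inl 1 : FanV) (by decide), hflip (Sum.inl 0 : FanV) (Sum.inr (0, 0) : FanV) (by decide)]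
      rfl
    have eQ0_0 : inDeg D (Sum.inr (0, 0) : FanV) = gA (b (Sum.inl 0 : FanV) (Sum.inr (0, 0) : FanV)) (b (Sum.inr (0, 0) : FanV) (Sum.inr (0, 1) : FanV)) := by
      rw [hind, cnt_two b (Sum.inr (0, 0) : FanV) (Sum.inl 0 : FanV) (Sum.inr (0, 1) : FanV) (by decide)
        (fun u hu => (by decide :
          ∀ u : FanV, fanGraph.Adj u (Sum.inr (0, 0) : FanV) → u = (Sum.inl 0 : FanV) ∨ u = (Sum.inr (0, 1) : FanV))
          u (hsupp u _ hu)),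
        hflip (Sum.inr (0, 0) : FanV) (Sum.inr (0, 1) : FanV) (by decide)]
      rfl
    have eQ0_1 : inDeg D (Sum.inr (0, 1) : FanV) = gA (b (Sum.inr (0, 0) : FanV) (Sum.inr (0, 1) : FanV)) (b (Sum.inr (0, 1) : FanV) (Sum.inr (0, 2) : FanV)) := by
      rw [hind, cnt_two b (Sum.inr (0, 1) : FanV) (Sum.inr (0, 0) : FanV) (Sum.inr (0, 2) : FanV) (by decide)
        (fun u hu => (by decide :
          ∀ u : FanV, fanGraph.Adj u (Sum.inr (0, 1) : FanV) → u = (Sum.inr (0, 0) : FanV) ∨ u = (Sum.inr (0, 2) : FanV))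
          u (hsupp u _ hu)),
        hflip (Sum.inr (0, 1) : FanV) (Sum.inr (0, 2) : FanV) (by decide)]
      rfl
    have eQ0_2 : inDeg D (Sum.inr (0, 2) : FanV) = gA (b (Sum.inr (0, 1) : FanV) (Sum.inr (0, 2) : FanV)) (b (Sum.inr (0, 2) : FanV) (Sum.inl 1 : FanV)) := by
      rw [hind, cnt_two b (Sum.inr (0, 2) : FanV) (Sum.inr (0, 1) : FanV) (Sum.inl 1 : FanV) (by decide)
        (fun u hu => (by decide :
          ∀ u : FanV, fanGraph.Adj u (Sum.inr (0, 2) : FanV) → u = (Sum.inr (0, 1) : FanV) ∨ u = (Sum.inl 1 : FanV))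
          u (hsupp u _ hu)),
        hflip (Sum.inr (0, 2) : FanV) (Sum.inl 1 : FanV) (by decide)]
      rfl
    have eP1 : inDeg D (Sum.inl 1 : FanV) = pV (b (Sum.inl 0 : FanV) (Sum.inl 1 : FanV)) (b (Sum.inl 1 : FanV) (Sum.inl 2 : FanV)) (b (Sum.inr (0, 2) : FanV) (Sum.inl 1 : FanV)) (b (Sum.inl 1 : FanV) (Sum.inr (1, 0) : FanV)) := by
      rw [hind, cnt_four b (Sum.inl 1 : FanV) (Sum.inl 0 : FanV) (Sum.inl 2 : FanV) (Sum.inr (0, 2) : FanV) (Sum.inr (1, 0) : FanV)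
        (by decide) (by decide) (by decide) (by decide) (by decide) (by decide)
        (fun u hu => (by decide :
          ∀ u : FanV, fanGraph.Adj u (Sum.inl 1 : FanV) → u = (Sum.inl 0 : FanV) ∨ u = (Sum.inl 2 : FanV) ∨ u = (Sum.inr (0, 2) : FanV) ∨ u = (Sum.inr (1, 0) : FanV))
          u (hsupp u _ hu)),
        hflip (Sum.inl 1 : FanV) (Sum.inl 2 : FanV) (by decide), hflip (Sum.inl 1 : FanV) (Sum.inr (1, 0) : FanV) (by decide)]
      rfl
    have eQ1_0 : inDeg D (Sum.inr (1, 0) : FanV) = gA (b (Sum.inl 1 : FanV) (Sum.inr (1, 0) : FanV)) (b (Sum.inr (1, 0) : FanV) (Sum.inr (1, 1) : FanV)) := by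
      rw [hind, cnt_two b (Sum.inr (1, 0) : FanV) (Sum.inl 1 : FanV) (Sum.inr (1, 1) : FanV) (by decide)
        (fun u hu => (by decide :
          ∀ u : FanV, fanGraph.Adj u (Sum.inr (1, 0) : FanV) → u = (Sum.inl 1 : FanV) ∨ u = (Sum.inr (1, 1) : FanV))
          u (hsupp u _ hu)),
        hflip (Sum.inr (1, 0) : FanV) (Sum.inr (1, 1) : FanV) (by decide)]
      rfl
    have eQ1_1 : inDeg D (Sum.inr (1, 1) : FanV) = gA (b (Sum.inr (1, 0) : FanV) (Sum.inr (1, 1) : FanV)) (b (Sum.inr (1, 1) : FanV) (Sum.inr (1, 2) : FanV)) := by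
      rw [hind, cnt_two b (Sum.inr (1, 1) : FanV) (Sum.inr (1, 0) : FanV) (Sum.inr (1, 2) : FanV) (by decide)
        (fun u hu => (by decide :
          ∀ u : FanV, fanGraph.Adj u (Sum.inr (1, 1) : FanV) → u = (Sum.inr (1, 0) : FanV) ∨ u = (Sum.inr (1, 2) : FanV))
          u (hsupp u _ hu)),
        hflip (Sum.inr (1, 1) : FanV) (Sum.inr (1, 2) : FanV) (by decide)]
      rfl
    have eQ1_2 : inDeg D (Sum.inr (1, 2) : FanV) = gA (b (Sum.inr (1, 1) : FanV) (Sum.inr (1, 2) : FanV)) (b (Sum.inr (1, 2) : FanV) (Sum.inl 2 : FanV)) := by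
      rw [hind, cnt_two b (Sum.inr (1, 2) : FanV) (Sum.inr (1, 1) : FanV) (Sum.inl 2 : FanV) (by decide)
        (fun u hu => (by decide :
          ∀ u : FanV, fanGraph.Adj u (Sum.inr (1, 2) : FanV) → u = (Sum.inr (1, 1) : FanV) ∨ u = (Sum.inl 2 : FanV))
          u (hsupp u _ hu)),
        hflip (Sum.inr (1, 2) : FanV) (Sum.inl 2 : FanV) (by decide)]
      rfl
    have eP2 : inDeg D (Sum.inl 2 : FanV) = pV (b (Sum.inl 1 : FanV) (Sum.inl 2 : FanV)) (b (Sum.inl 2 : FanV) (Sum.inl 3 : FanV)) (b (Sum.inr (1, 2) : FanV) (Sum.inl 2 : FanV)) (b (Sum.inl 2 : FanV) (Sum.inr (2, 0) : FanV)) := by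
      rw [hind, cnt_four b (Sum.inl 2 : FanV) (Sum.inl 1 : FanV) (Sum.inl 3 : FanV) (Sum.inr (1, 2) : FanV) (Sum.inr (2, 0) : FanV)
        (by decide) (by decide) (by decide) (by decide) (by decide) (by decide)
        (fun u hu => (by decide :
          ∀ u : FanV, fanGraph.Adj u (Sum.inl 2 : FanV) → u = (Sum.inl 1 : FanV) ∨ u = (Sum.inl 3 : FanV) ∨ u = (Sum.inr (1, 2) : FanV) ∨ u = (Sum.inr (2, 0) : FanV))
          u (hsupp u _ hu)),
        hflip (Sum.inl 2 : FanV) (Sum.inl 3 : FanV) (by decide), hflip (Sum.inl 2 : FanV) (Sum.inr (2, 0) : FanV) (by decide)]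
      rfl
    have eQ2_0 : inDeg D (Sum.inr (2, 0) : FanV) = gA (b (Sum.inl 2 : FanV) (Sum.inr (2, 0) : FanV)) (b (Sum.inr (2, 0) : FanV) (Sum.inr (2, 1) : FanV)) := by
      rw [hind, cnt_two b (Sum.inr (2, 0) : FanV) (Sum.inl 2 : FanV) (Sum.inr (2, 1) : FanV) (by decide)
        (fun u hu => (by decide :
          ∀ u : FanV, fanGraph.Adj u (Sum.inr (2, 0) : FanV) → u = (Sum.inl 2 : FanV) ∨ u = (Sum.inr (2, 1) : FanV))
          u (hsupp u _ hu)),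
        hflip (Sum.inr (2, 0) : FanV) (Sum.inr (2, 1) : FanV) (by decide)]
      rfl
    have eQ2_1 : inDeg D (Sum.inr (2, 1) : FanV) = gA (b (Sum.inr (2, 0) : FanV) (Sum.inr (2, 1) : FanV)) (b (Sum.inr (2, 1) : FanV) (Sum.inr (2, 2) : FanV)) := by
      rw [hind, cnt_two b (Sum.inr (2, 1) : FanV) (Sum.inr (2, 0) : FanV) (Sum.inr (2, 2) : FanV) (by decide)
        (fun u hu => (by decide :
          ∀ u : FanV, fanGraph.Adj u (Sum.inr (2, 1) : FanV) → u = (Sum.inr (2, 0) : FanV) ∨ u = (Sum.inr (2, 2) : FanV))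
          u (hsupp u _ hu)),
        hflip (Sum.inr (2, 1) : FanV) (Sum.inr (2, 2) : FanV) (by decide)]
      rfl
    have eQ2_2 : inDeg D (Sum.inr (2, 2) : FanV) = gA (b (Sum.inr (2, 1) : FanV) (Sum.inr (2, 2) : FanV)) (b (Sum.inr (2, 2) : FanV) (Sum.inl 3 : FanV)) := by
      rw [hind, cnt_two b (Sum.inr (2, 2) : FanV) (Sum.inr (2, 1) : FanV) (Sum.inl 3 : FanV) (by decide)
        (fun u hu => (by decide :
          ∀ u : FanV, fanGraph.Adj u (Sum.inr (2, 2) : FanV) → u = (Sum.inr (2, 1) : FanV) ∨ u = (Sum.inl 3 : FanV))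
          u (hsupp u _ hu)),
        hflip (Sum.inr (2, 2) : FanV) (Sum.inl 3 : FanV) (by decide)]
      rfl
    have eP3 : inDeg D (Sum.inl 3 : FanV) = pV (b (Sum.inl 2 : FanV) (Sum.inl 3 : FanV)) (b (Sum.inl 3 : FanV) (Sum.inl 4 : FanV)) (b (Sum.inr (2, 2) : FanV) (Sum.inl 3 : FanV)) (b (Sum.inl 3 : FanV) (Sum.inr (3, 0) : FanV)) := by
      rw [hind, cnt_four b (Sum.inl 3 : FanV) (Sum.inl 2 : FanV) (Sum.inl 4 : FanV) (Sum.inr (2, 2) : FanV) (Sum.inr (3, 0) : FanV)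
        (by decide) (by decide) (by decide) (by decide) (by decide) (by decide)
        (fun u hu => (by decide :
          ∀ u : FanV, fanGraph.Adj u (Sum.inl 3 : FanV) → u = (Sum.inl 2 : FanV) ∨ u = (Sum.inl 4 : FanV) ∨ u = (Sum.inr (2, 2) : FanV) ∨ u = (Sum.inr (3, 0) : FanV))
          u (hsupp u _ hu)),
        hflip (Sum.inl 3 : FanV) (Sum.inl 4 : FanV) (by decide), hflip (Sum.inl 3 : FanV) (Sum.inr (3, 0) : FanV) (by decide)]
      rfl
    have eQ3_0 : inDeg D (Sum.inr (3, 0) : FanV) = gA (b (Sum.inl 3 : FanV) (Sum.inr (3, 0) : FanV)) (b (Sum.inr (3, 0) : FanV) (Sum.inr (3, 1) : FanV)) := by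
      rw [hind, cnt_two b (Sum.inr (3, 0) : FanV) (Sum.inl 3 : FanV) (Sum.inr (3, 1) : FanV) (by decide)
        (fun u hu => (by decide :
          ∀ u : FanV, fanGraph.Adj u (Sum.inr (3, 0) : FanV) → u = (Sum.inl 3 : FanV) ∨ u = (Sum.inr (3, 1) : FanV))
          u (hsupp u _ hu)),
        hflip (Sum.inr (3, 0) : FanV) (Sum.inr (3, 1) : FanV) (by decide)]
      rfl
    have eQ3_1 : inDeg D (Sum.inr (3, 1) : FanV) = gA (b (Sum.inr (3, 0) : FanV) (Sum.inr (3, 1) : FanV)) (b (Sum.inr (3, 1) : FanV) (Sum.inr (3, 2) : FanV)) := by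
      rw [hind, cnt_two b (Sum.inr (3, 1) : FanV) (Sum.inr (3, 0) : FanV) (Sum.inr (3, 2) : FanV) (by decide)
        (fun u hu => (by decide :
          ∀ u : FanV, fanGraph.Adj u (Sum.inr (3, 1) : FanV) → u = (Sum.inr (3, 0) : FanV) ∨ u = (Sum.inr (3, 2) : FanV))
          u (hsupp u _ hu)),
        hflip (Sum.inr (3, 1) : FanV) (Sum.inr (3, 2) : FanV) (by decide)]
      rfl
    have eQ3_2 : inDeg D (Sum.inr (3, 2) : FanV) = gA (b (Sum.inr (3, 1) : FanV) (Sum.inr (3, 2) : FanV)) (b (Sum.inr (3, 2) : FanV) (Sum.inl 4 : FanV)) := by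
      rw [hind, cnt_two b (Sum.inr (3, 2) : FanV) (Sum.inr (3, 1) : FanV) (Sum.inl 4 : FanV) (by decide)
        (fun u hu => (by decide :
          ∀ u : FanV, fanGraph.Adj u (Sum.inr (3, 2) : FanV) → u = (Sum.inr (3, 1) : FanV) ∨ u = (Sum.inl 4 : FanV))
          u (hsupp u _ hu)),
        hflip (Sum.inr (3, 2) : FanV) (Sum.inl 4 : FanV) (by decide)]
      rfl
    have eP4 : inDeg D (Sum.inl 4 : FanV) = pV (b (Sum.inl 3 : FanV) (Sum.inl 4 : FanV)) (b (Sum.inl 4 : FanV) (Sum.inl 0 : FanV)) (b (Sum.inr (3, 2) : FanV) (Sum.inl 4 : FanV)) (b (Sum.inl 4 : FanV) (Sum.inr (4, 0) : FanV)) := by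
      rw [hind, cnt_four b (Sum.inl 4 : FanV) (Sum.inl 3 : FanV) (Sum.inl 0 : FanV) (Sum.inr (3, 2) : FanV) (Sum.inr (4, 0) : FanV)
        (by decide) (by decide) (by decide) (by decide) (by decide) (by decide)
        (fun u hu => (by decide :
          ∀ u : FanV, fanGraph.Adj u (Sum.inl 4 : FanV) → u = (Sum.inl 3 : FanV) ∨ u = (Sum.inl 0 : FanV) ∨ u = (Sum.inr (3, 2) : FanV) ∨ u = (Sum.inr (4, 0) : FanV))
          u (hsupp u _ hu)),
        hflip (Sum.inl 4 : FanV) (Sum.inl 0 : FanV) (by decide), hflip (Sum.inl 4 : FanV) (Sum.inr (4, 0) : FanV) (by decide)]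
      rfl
    have eQ4_0 : inDeg D (Sum.inr (4, 0) : FanV) = gA (b (Sum.inl 4 : FanV) (Sum.inr (4, 0) : FanV)) (b (Sum.inr (4, 0) : FanV) (Sum.inr (4, 1) : FanV)) := by
      rw [hind, cnt_two b (Sum.inr (4, 0) : FanV) (Sum.inl 4 : FanV) (Sum.inr (4, 1) : FanV) (by decide)
        (fun u hu => (by decide :
          ∀ u : FanV, fanGraph.Adj u (Sum.inr (4, 0) : FanV) → u = (Sum.inl 4 : FanV) ∨ u = (Sum.inr (4, 1) : FanV))
          u (hsupp u _ hu)),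
        hflip (Sum.inr (4, 0) : FanV) (Sum.inr (4, 1) : FanV) (by decide)]
      rfl
    have eQ4_1 : inDeg D (Sum.inr (4, 1) : FanV) = gA (b (Sum.inr (4, 0) : FanV) (Sum.inr (4, 1) : FanV)) (b (Sum.inr (4, 1) : FanV) (Sum.inr (4, 2) : FanV)) := by
      rw [hind, cnt_two b (Sum.inr (4, 1) : FanV) (Sum.inr (4, 0) : FanV) (Sum.inr (4, 2) : FanV) (by decide)
        (fun u hu => (by decide :
          ∀ u : FanV, fanGraph.Adj u (Sum.inr (4, 1) : FanV) → u = (Sum.inr (4, 0) : FanV) ∨ u = (Sum.inr (4, 2) : FanV))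
          u (hsupp u _ hu)),
        hflip (Sum.inr (4, 1) : FanV) (Sum.inr (4, 2) : FanV) (by decide)]
      rfl
    have eQ4_2 : inDeg D (Sum.inr (4, 2) : FanV) = gA (b (Sum.inr (4, 1) : FanV) (Sum.inr (4, 2) : FanV)) (b (Sum.inr (4, 2) : FanV) (Sum.inl 0 : FanV)) := by
      rw [hind, cnt_two b (Sum.inr (4, 2) : FanV) (Sum.inr (4, 1) : FanV) (Sum.inl 0 : FanV) (by decide)
        (fun u hu => (by decide :
          ∀ u : FanV, fanGraph.Adj u (Sum.inr (4, 2) : FanV) → u = (Sum.inr (4, 1) : FanV) ∨ u = (Sum.inl 0 : FanV))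
          u (hsupp u _ hu)),
        hflip (Sum.inr (4, 2) : FanV) (Sum.inl 0 : FanV) (by decide)]
      rfl
    exact key (b (Sum.inl 0 : FanV) (Sum.inl 1 : FanV))
      (b (Sum.inl 1 : FanV) (Sum.inl 2 : FanV))
      (b (Sum.inl 2 : FanV) (Sum.inl 3 : FanV))
      (b (Sum.inl 3 : FanV) (Sum.inl 4 : FanV))
      (b (Sum.inl 4 : FanV) (Sum.inl 0 : FanV))
      (b (Sum.inl 0 : FanV) (Sum.inr (0, 0) : FanV))
      (b (Sum.inr (0, 0) : FanV) (Sum.inr (0, 1) : FanV))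
      (b (Sum.inr (0, 1) : FanV) (Sum.inr (0, 2) : FanV))
      (b (Sum.inr (0, 2) : FanV) (Sum.inl 1 : FanV))
      (by rw [← eQ0_0, ← eQ0_1]; exact hProp (Sum.inr (0, 0) : FanV) (Sum.inr (0, 1) : FanV) (by decide))
      (by rw [← eQ0_1, ← eQ0_2]; exact hProp (Sum.inr (0, 1) : FanV) (Sum.inr (0, 2) : FanV) (by decide))
      (b (Sum.inl 1 : FanV) (Sum.inr (1, 0) : FanV))
      (b (Sum.inr (1, 0) : FanV) (Sum.inr (1, 1) : FanV))
      (b (Sum.inr (1, 1) : FanV) (Sum.inr (1, 2) : FanV))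
      (b (Sum.inr (1, 2) : FanV) (Sum.inl 2 : FanV))
      (by rw [← eQ1_0, ← eQ1_1]; exact hProp (Sum.inr (1, 0) : FanV) (Sum.inr (1, 1) : FanV) (by decide))
      (by rw [← eQ1_1, ← eQ1_2]; exact hProp (Sum.inr (1, 1) : FanV) (Sum.inr (1, 2) : FanV) (by decide))
      (by rw [← eP1]; exact hB (Sum.inl 1 : FanV))
      (by rw [← eP1, ← eQ1_0]; exact hProp (Sum.inl 1 : FanV) (Sum.inr (1, 0) : FanV) (by decide))
      (by rw [← eQ0_2, ← eP1]; exact hProp (Sum.inr (0, 2) : FanV) (Sum.inl 1 : FanV) (by decide))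
      (b (Sum.inl 2 : FanV) (Sum.inr (2, 0) : FanV))
      (b (Sum.inr (2, 0) : FanV) (Sum.inr (2, 1) : FanV))
      (b (Sum.inr (2, 1) : FanV) (Sum.inr (2, 2) : FanV))
      (b (Sum.inr (2, 2) : FanV) (Sum.inl 3 : FanV))
      (by rw [← eQ2_0, ← eQ2_1]; exact hProp (Sum.inr (2, 0) : FanV) (Sum.inr (2, 1) : FanV) (by decide))
      (by rw [← eQ2_1, ← eQ2_2]; exact hProp (Sum.inr (2, 1) : FanV) (Sum.inr (2, 2) : FanV) (by decide))
      (by rw [← eP2]; exact hB (Sum.inl 2 : FanV))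
      (by rw [← eP2, ← eQ2_0]; exact hProp (Sum.inl 2 : FanV) (Sum.inr (2, 0) : FanV) (by decide))
      (by rw [← eQ1_2, ← eP2]; exact hProp (Sum.inr (1, 2) : FanV) (Sum.inl 2 : FanV) (by decide))
      (by rw [← eP1, ← eP2]; exact hProp (Sum.inl 1 : FanV) (Sum.inl 2 : FanV) (by decide))
      (b (Sum.inl 3 : FanV) (Sum.inr (3, 0) : FanV))
      (b (Sum.inr (3, 0) : FanV) (Sum.inr (3, 1) : FanV))
      (b (Sum.inr (3, 1) : FanV) (Sum.inr (3, 2) : FanV))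
      (b (Sum.inr (3, 2) : FanV) (Sum.inl 4 : FanV))
      (by rw [← eQ3_0, ← eQ3_1]; exact hProp (Sum.inr (3, 0) : FanV) (Sum.inr (3, 1) : FanV) (by decide))
      (by rw [← eQ3_1, ← eQ3_2]; exact hProp (Sum.inr (3, 1) : FanV) (Sum.inr (3, 2) : FanV) (by decide))
      (by rw [← eP3]; exact hB (Sum.inl 3 : FanV))
      (by rw [← eP3, ← eQ3_0]; exact hProp (Sum.inl 3 : FanV) (Sum.inr (3, 0) : FanV) (by decide))
      (by rw [← eQ2_2, ← eP3]; exact hProp (Sum.inr (2, 2) : FanV) (Sum.inl 3 : FanV) (by decide))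
      (by rw [← eP2, ← eP3]; exact hProp (Sum.inl 2 : FanV) (Sum.inl 3 : FanV) (by decide))
      (b (Sum.inl 4 : FanV) (Sum.inr (4, 0) : FanV))
      (b (Sum.inr (4, 0) : FanV) (Sum.inr (4, 1) : FanV))
      (b (Sum.inr (4, 1) : FanV) (Sum.inr (4, 2) : FanV))
      (b (Sum.inr (4, 2) : FanV) (Sum.inl 0 : FanV))
      (by rw [← eQ4_0, ← eQ4_1]; exact hProp (Sum.inr (4, 0) : FanV) (Sum.inr (4, 1) : FanV) (by decide))
      (by rw [← eQ4_1, ← eQ4_2]; exact hProp (Sum.inr (4, 1) : FanV) (Sum.inr (4, 2) : FanV) (by decide))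
      (by rw [← eP4]; exact hB (Sum.inl 4 : FanV))
      (by rw [← eP4, ← eQ4_0]; exact hProp (Sum.inl 4 : FanV) (Sum.inr (4, 0) : FanV) (by decide))
      (by rw [← eQ3_2, ← eP4]; exact hProp (Sum.inr (3, 2) : FanV) (Sum.inl 4 : FanV) (by decide))
      (by rw [← eP3, ← eP4]; exact hProp (Sum.inl 3 : FanV) (Sum.inl 4 : FanV) (by decide))
      (by rw [← eP0]; exact hB (Sum.inl 0 : FanV))
      (by rw [← eP0, ← eQ0_0]; exact hProp (Sum.inl 0 : FanV) (Sum.inr (0, 0) : FanV) (by decide))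
      (by rw [← eQ4_2, ← eP0]; exact hProp (Sum.inr (4, 2) : FanV) (Sum.inl 0 : FanV) (by decide))
      (by rw [← eP4, ← eP0]; exact hProp (Sum.inl 4 : FanV) (Sum.inl 0 : FanV) (by decide))
      (by rw [← eP0, ← eP1]; exact hProp (Sum.inl 0 : FanV) (Sum.inl 1 : FanV) (by decide))
  · refine ⟨fun u v => dor u v = true, ⟨?_, ?_⟩, ?_, ?_⟩
    · exact (by decide : ∀ u v, fanGraph.Adj u v ↔ (dor u v = true ∨ dor v u = true))
    · exact (by decide : ∀ u v, ¬(dor u v = true ∧ dor v u = true))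
    · intro u v h
      rw [inDeg_eq_card, inDeg_eq_card]
      exact (by decide : ∀ u v, fanGraph.Adj u v → cnt u ≠ cnt v) u v h
    · intro v
      rw [inDeg_eq_card]
      exact (by decide : ∀ v, cnt v ≤ 3) v
end
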